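/- Let G, H, K be pattern groups on {1,2,…,n} over F_q with G = H ⋉ K (that is, H and K are pattern subgroups of G, K is normal in G, G = HK, and H ∩ K = {1}). If (k−1)(h−1) = 0 (matrix product) for all h ∈ H and k ∈ K, then SInd_H^G(χ) = Ind_H^G(χ) for every superclass function χ of H. -/

import Mathlib

/-!
STATEMENT 6: Let G, H, K be pattern groups on {1,…,n} over F_q with G = H ⋉ K
(H, K pattern subgroups of G, K normal in G, G = HK, H ∩ K = {1}).
If (k−1)(h−1) = 0 for all h ∈ H and k ∈ K, then SInd_H^G(χ) = Ind_H^G(χ)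
for every superclass function χ of H.
-/
open scoped Classical

noncomputable section

def setFinset {α : Type*} [Fintype α] (S : Set α) : Finset α :=
  Finset.univ.filter (· ∈ S)

/-- A strict partial order on `{1,…,n}` that is a subrelation of the usual order. -/
def IsPatternOrder {n : ℕ} (P : Fin n → Fin n → Prop) : Prop :=
  (∀ i j, P i j → i < j) ∧ ∀ i j k, P i j → P j k → P i k

/-- The pattern group `U_P` of unipotent upper-triangular matrices supported on `P`. -/
def patternGroup (F : Type*) [Field F] {n : ℕ} (P : Fin n → Fin n → Prop) :
    Set (Matrix (Fin n) (Fin n) F) :=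
  {u | (∀ i, u i i = 1) ∧ ∀ i j, i ≠ j → u i j ≠ 0 → P i j}

/-- `χ` is constant on the superclasses of `G`: `u ~ v` iff `v − 1 ∈ G(u−1)G`. -/
def IsSuperclassFn {A : Type*} [Ring A] (G : Set A) (χ : A → ℂ) : Prop :=
  ∀ u ∈ G, ∀ v ∈ G, (∃ x ∈ G, ∃ y ∈ G, v - 1 = x * (u - 1) * y) → χ u = χ v

/-- Superinduction `SInd_H^G(χ)(g) = (1/(|G||H|)) Σ_{x,y∈G} χ̇(x(g−1)y + 1)`. -/
def SInd {A : Type*} [Ring A] [Fintype A] (G H : Set A) (χ : A → ℂ) (g : A) : ℂ :=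
  (((setFinset G).card : ℂ) * ((setFinset H).card : ℂ))⁻¹ *
    ∑ x ∈ setFinset G, ∑ y ∈ setFinset G,
      if x * (g - 1) * y + 1 ∈ H then χ (x * (g - 1) * y + 1) else 0

/-- Induction `Ind_H^G(χ)(g) = (1/|H|) Σ_{y∈G} χ̇(y⁻¹ g y)`. -/
def Ind {A : Type*} [Ring A] [Fintype A] (G H : Set A) (χ : A → ℂ) (g : A) : ℂ :=
  ((setFinset H).card : ℂ)⁻¹ *
    ∑ y ∈ setFinset G,
      if Ring.inverse y * g * y ∈ H then χ (Ring.inverse y * g * y) else 0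


/-!
Write `χ̇ = H.indicator χ` for the extension of `χ` by zero. For `u ∈ H` and `x = hk ∈ HK = G`,
the hypothesis `(k - 1)(u - 1) = 0` gives `k(u - 1) = u - 1`, and `h(u - 1) + 1` lies in the
superclass of `u`; applying this also to `x⁻¹` shows that `m ↦ χ̇(m + 1)` is invariant under left
multiplication by `G`. Hence in `SInd_H^G(χ)(g)` the sum over `x` only contributes a factor `|G|`,
and in `Ind_H^G(χ)(g)` one writes `y⁻¹gy = y⁻¹(g - 1)y + 1` and drops `y⁻¹`: both equal
`|H|⁻¹ Σ_{y ∈ G} χ̇((g - 1)y + 1)`.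
-/

open Finset

theorem mem_setFinset {α : Type*} [Fintype α] {S : Set α} {x : α} :
    x ∈ setFinset S ↔ x ∈ S := by
  simp [setFinset]

theorem Submonoid.inverse_mem_of_finite {M₀ : Type*} [MonoidWithZero M₀] [Finite M₀]
    (S : Submonoid M₀) {y : M₀} (hy : y ∈ S) (hunit : IsUnit y) : Ring.inverse y ∈ S := by
  obtain ⟨u, rfl⟩ := hunit
  obtain ⟨k, hk⟩ : u⁻¹ ∈ Submonoid.powers u :=
    mem_powers_iff_mem_zpowers.2 (inv_mem (Subgroup.mem_zpowers u))
  rw [Ring.inverse_unit, ← hk, Units.val_pow_eq_pow_val]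
  exact pow_mem hy k

namespace NonUnitalSubring

variable {A : Type*} [Ring A] (N : NonUnitalSubring A)

def oneAdd : Submonoid A where
  carrier := {u | u - 1 ∈ N}
  one_mem' := by simp [zero_mem]
  mul_mem' {u v} hu hv := by
    have e : u * v - 1 = (u - 1) * (v - 1) + (u - 1) + (v - 1) := by noncomm_ring
    simp only [Set.mem_ofPred_eq, e] at hu hv ⊢
    exact add_mem (add_mem (mul_mem hu hv) hu) hv

theorem mem_oneAdd {u : A} : u ∈ N.oneAdd ↔ u - 1 ∈ N := Iff.rfl

theorem mul_sub_one_add_one_mem_oneAdd {h u : A} (hh : h ∈ N.oneAdd) (hu : u ∈ N.oneAdd) :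
    h * (u - 1) + 1 ∈ N.oneAdd := by
  have e : h * (u - 1) + 1 - 1 = (h - 1) * (u - 1) + (u - 1) := by noncomm_ring
  rw [mem_oneAdd, e]
  exact add_mem (mul_mem hh hu) hu

end NonUnitalSubring

section PatternGroup

variable {n : ℕ} {P : Fin n → Fin n → Prop}

/-- The algebra `n_P` of matrices supported on `P`. -/
def patternSubring (R : Type*) [Ring R] (hP : ∀ i j k, P i j → P j k → P i k) :
    NonUnitalSubring (Matrix (Fin n) (Fin n) R) where
  carrier := {m | ∀ i j, m i j ≠ 0 → P i j}
  zero_mem' := by simp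
  add_mem' {a b} ha hb i j hab := by
    by_cases hai : a i j = 0
    · exact hb i j (by simpa [hai] using hab)
    · exact ha i j hai
  neg_mem' {a} ha i j h := ha i j (by simpa using h)
  mul_mem' {a b} ha hb i j hab := by
    rw [Matrix.mul_apply] at hab
    obtain ⟨k, -, hk⟩ := Finset.exists_ne_zero_of_sum_ne_zero hab
    exact hP i k j (ha i k (left_ne_zero_of_mul hk)) (hb k j (right_ne_zero_of_mul hk))

theorem mem_patternSubring {R : Type*} [Ring R] {hP : ∀ i j k, P i j → P j k → P i k}
    {m : Matrix (Fin n) (Fin n) R} : m ∈ patternSubring R hP ↔ ∀ i j, m i j ≠ 0 → P i j :=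
  Iff.rfl

variable {F : Type*} [Field F]

theorem patternGroup_eq_oneAdd (hP : IsPatternOrder P) :
    patternGroup F P = ((patternSubring F hP.2).oneAdd : Set (Matrix (Fin n) (Fin n) F)) := by
  ext u
  rw [SetLike.mem_coe, NonUnitalSubring.mem_oneAdd, mem_patternSubring]
  constructor
  · rintro ⟨hdiag, hoff⟩ i j hij
    rcases eq_or_ne i j with rfl | hne
    · simp [hdiag] at hij
    · exact hoff i j hne (by simpa [Matrix.one_apply_ne hne] using hij)
  · intro h
    refine ⟨fun i => ?_, fun i j hne hij => h i j (by simpa [Matrix.one_apply_ne hne] using hij)⟩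
    by_contra hi
    exact lt_irrefl i (hP.1 i i (h i i (by simpa [sub_eq_zero] using hi)))

theorem isUnit_of_mem_patternGroup (hP : ∀ i j, P i j → i < j) {u : Matrix (Fin n) (Fin n) F}
    (hu : u ∈ patternGroup F P) : IsUnit u := by
  have htri : u.IsUpperTriangular := fun i j hji => by
    by_contra h
    exact (hP i j (hu.2 i j hji.ne' h)).not_gt hji
  rw [Matrix.isUnit_iff_isUnit_det, Matrix.det_of_isUpperTriangular htri]
  simp [hu.1]

theorem inverse_mem_patternGroup [Fintype F] (hP : IsPatternOrder P)
    {u : Matrix (Fin n) (Fin n) F} (hu : u ∈ patternGroup F P) :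
    Ring.inverse u ∈ patternGroup F P := by
  have hunit := isUnit_of_mem_patternGroup hP.1 hu
  rw [patternGroup_eq_oneAdd hP] at hu ⊢
  exact Submonoid.inverse_mem_of_finite _ hu hunit

end PatternGroup

section Superinduction

variable {A : Type*} [Ring A] {G H K : Set A} {χ : A → ℂ}

def IsLeftInvariantExtension (G H : Set A) (χ : A → ℂ) : Prop :=
  ∀ x ∈ G, ∀ m, H.indicator χ (x * m + 1) = H.indicator χ (m + 1)

theorem indicator_mul_add_one_eq_of_add_one_mem (hH1 : 1 ∈ H)
    (hHmul : ∀ h ∈ H, ∀ u ∈ H, h * (u - 1) + 1 ∈ H) (hχ : IsSuperclassFn H χ)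
    (hprod : ∀ x ∈ G, ∃ h ∈ H, ∃ k ∈ K, x = h * k)
    (hzero : ∀ h ∈ H, ∀ k ∈ K, (k - 1) * (h - 1) = 0)
    {x : A} (hx : x ∈ G) {m : A} (hm : m + 1 ∈ H) :
    H.indicator χ (x * m + 1) = H.indicator χ (m + 1) := by
  obtain ⟨h, hh, k, hk, rfl⟩ := hprod x hx
  have hkm : k * m = m := by
    simpa [sub_mul, sub_eq_zero] using hzero _ hm k hk
  have hhm : h * m + 1 ∈ H := by simpa using hHmul h hh _ hm
  rw [mul_assoc, hkm, Set.indicator_of_mem hhm, Set.indicator_of_mem hm]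
  exact (hχ _ hm _ hhm ⟨h, hh, 1, hH1, by noncomm_ring⟩).symm

theorem isLeftInvariantExtension_of_forall_add_one_mem
    (hG : ∀ y ∈ G, IsUnit y ∧ Ring.inverse y ∈ G)
    (hmem : ∀ x ∈ G, ∀ m, m + 1 ∈ H → H.indicator χ (x * m + 1) = H.indicator χ (m + 1)) :
    IsLeftInvariantExtension G H χ := by
  intro x hx m
  by_cases hm : m + 1 ∈ H
  · exact hmem x hx m hm
  by_cases hxm : x * m + 1 ∈ H
  · have := hmem _ (hG x hx).2 _ hxm
    rwa [← mul_assoc, Ring.inverse_mul_cancel x (hG x hx).1, one_mul, eq_comm] at this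
  · rw [Set.indicator_of_notMem hm, Set.indicator_of_notMem hxm]

variable [Fintype A]

theorem sInd_eq_of_isLeftInvariantExtension (hχ : IsLeftInvariantExtension G H χ) (g : A) :
    SInd G H χ g = ((setFinset H).card : ℂ)⁻¹ *
      ∑ y ∈ setFinset G, H.indicator χ ((g - 1) * y + 1) := by
  have hrow : ∀ x ∈ setFinset G, (∑ y ∈ setFinset G,
      if x * (g - 1) * y + 1 ∈ H then χ (x * (g - 1) * y + 1) else 0) =
        ∑ y ∈ setFinset G, H.indicator χ ((g - 1) * y + 1) := fun x hx =>
    sum_congr rfl fun y _ => by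
      rw [← Set.indicator_apply, mul_assoc, hχ x (mem_setFinset.1 hx)]
  rw [SInd, sum_congr rfl hrow, sum_const, nsmul_eq_mul]
  rcases (setFinset G).eq_empty_or_nonempty with hempty | hne
  · simp [hempty]
  · have hcard : ((setFinset G).card : ℂ) ≠ 0 := Nat.cast_ne_zero.2 hne.card_pos.ne'
    field_simp

theorem ind_eq_of_isLeftInvariantExtension (hG : ∀ y ∈ G, IsUnit y ∧ Ring.inverse y ∈ G)
    (hχ : IsLeftInvariantExtension G H χ) (g : A) :
    Ind G H χ g = ((setFinset H).card : ℂ)⁻¹ *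
      ∑ y ∈ setFinset G, H.indicator χ ((g - 1) * y + 1) := by
  rw [Ind]
  congr 1
  refine sum_congr rfl fun y hy => ?_
  obtain ⟨hunit, hinv⟩ := hG y (mem_setFinset.1 hy)
  have e : Ring.inverse y * g * y = Ring.inverse y * ((g - 1) * y) + 1 :=
    calc Ring.inverse y * g * y = Ring.inverse y * g * y - Ring.inverse y * y + 1 := by
          rw [Ring.inverse_mul_cancel y hunit, sub_add_cancel]
      _ = Ring.inverse y * ((g - 1) * y) + 1 := by noncomm_ring
  rw [← Set.indicator_apply, e, hχ _ hinv]

theorem sInd_eq_ind_of_isLeftInvariantExtension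
    (hG : ∀ y ∈ G, IsUnit y ∧ Ring.inverse y ∈ G) (hχ : IsLeftInvariantExtension G H χ)
    (g : A) : SInd G H χ g = Ind G H χ g := by
  rw [sInd_eq_of_isLeftInvariantExtension hχ, ind_eq_of_isLeftInvariantExtension hG hχ]

end Superinduction

theorem sind_eq_ind_of_semidirect_product_general
    {n : ℕ} (F : Type*) [Field F] [Fintype F]
    (PG PH PK : Fin n → Fin n → Prop)
    (hPG : IsPatternOrder PG) (hPH : IsPatternOrder PH)
    (hprod : ∀ g ∈ patternGroup F PG, ∃ h ∈ patternGroup F PH, ∃ k ∈ patternGroup F PK,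
      g = h * k)
    (hzero : ∀ h ∈ patternGroup F PH, ∀ k ∈ patternGroup F PK, (k - 1) * (h - 1) = 0) :
    ∀ χ : Matrix (Fin n) (Fin n) F → ℂ, IsSuperclassFn (patternGroup F PH) χ →
      ∀ g ∈ patternGroup F PG,
        SInd (patternGroup F PG) (patternGroup F PH) χ g =
          Ind (patternGroup F PG) (patternGroup F PH) χ g := by
  intro χ hχ g _
  have hG : ∀ y ∈ patternGroup F PG, IsUnit y ∧ Ring.inverse y ∈ patternGroup F PG :=
    fun y hy => ⟨isUnit_of_mem_patternGroup hPG.1 hy, inverse_mem_patternGroup hPG hy⟩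
  have hH1 : 1 ∈ patternGroup F PH := by
    rw [patternGroup_eq_oneAdd hPH]
    exact one_mem _
  have hHmul : ∀ h ∈ patternGroup F PH, ∀ u ∈ patternGroup F PH,
      h * (u - 1) + 1 ∈ patternGroup F PH := by
    rw [patternGroup_eq_oneAdd hPH]
    exact fun h hh u hu => NonUnitalSubring.mul_sub_one_add_one_mem_oneAdd _ hh hu
  refine sInd_eq_ind_of_isLeftInvariantExtension hG
    (isLeftInvariantExtension_of_forall_add_one_mem hG fun x hx m hm => ?_) g
  exact indicator_mul_add_one_eq_of_add_one_mem hH1 hHmul hχ hprod hzero hx hm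

theorem sind_eq_ind_of_semidirect_product
    {n : ℕ} (F : Type*) [Field F] [Fintype F]
    (PG PH PK : Fin n → Fin n → Prop)
    (hPG : IsPatternOrder PG) (hPH : IsPatternOrder PH) (hPK : IsPatternOrder PK)
    (hHG : ∀ i j, PH i j → PG i j) (hKG : ∀ i j, PK i j → PG i j)
    (hnormal : ∀ g ∈ patternGroup F PG, ∀ k ∈ patternGroup F PK,
      g * k * g⁻¹ ∈ patternGroup F PK)
    (hprod : ∀ g ∈ patternGroup F PG, ∃ h ∈ patternGroup F PH, ∃ k ∈ patternGroup F PK,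
      g = h * k)
    (hint : ∀ u : Matrix (Fin n) (Fin n) F,
      u ∈ patternGroup F PH → u ∈ patternGroup F PK → u = 1)
    (hzero : ∀ h ∈ patternGroup F PH, ∀ k ∈ patternGroup F PK, (k - 1) * (h - 1) = 0) :
    ∀ χ : Matrix (Fin n) (Fin n) F → ℂ, IsSuperclassFn (patternGroup F PH) χ →
      ∀ g ∈ patternGroup F PG,
        SInd (patternGroup F PG) (patternGroup F PH) χ g =
          Ind (patternGroup F PG) (patternGroup F PH) χ g :=
  sind_eq_ind_of_semidirect_product_general F PG PH PK hPG hPH hprod hzero
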